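/- Let X, Y, Z be real Banach spaces, K ⊆ Y a convex cone with nonempty interior, S ⊆ X a nonempty closed set, C ⊆ Z a proper closed convex cone with C ≠ {0}, f : X → Y, and G : X ⇉ Z with G(x) ≠ ∅ for all x. Let R = S ∩ {x : G(x) ⊆ C} and let x̄ ∈ R be a locally weakly efficient solution of minimizing f over R. Suppose that (i) f is B-differentiable at x̄; (ii) G is lower semicontinuous at every point of some ball around x̄ and metrically C-increasing around x̄ relative to S; (iii) G admits a positively homogeneous set-valued mapping H as an outer prederivative at x̄; (iv) Bf(x̄;·) is K-convexlike on the set H⁺¹(C) ∩ T(S,x̄); (v) H(0) ⊆ C; (vi) H is Lipschitz with respect to the Hausdorff distance. Then there exists y* ∈ K⁺ \ {0} such that ⟨y*, Bf(x̄;v)⟩ ≥ 0 for all v ∈ H⁺¹(C) ∩ T(S,x̄). -/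

import Mathlib

open Filter Topology Metric Set Pointwise
open scoped ENNReal NNReal

noncomputable section

/-- The `r`-enlargement `B(A,r)` of a set `A`. -/
def enlarge {Z : Type*} [SeminormedAddCommGroup Z] (A : Set Z) (r : ℝ) : Set Z :=
  {z | Metric.infDist z A ≤ r}

/-- Merit function `ν(x) = sup_{z ∈ G(x)} dist(z, C)`, with values in `[0,∞]`. -/
def merit {X Z : Type*} [SeminormedAddCommGroup Z] (G : X → Set Z) (C : Set Z) (x : X) : ℝ≥0∞ :=
  ⨆ z ∈ G x, ENNReal.ofReal (Metric.infDist z C)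

/-- Lower semicontinuity of a set-valued map at a point. -/
def LscAt {X Z : Type*} [TopologicalSpace X] [TopologicalSpace Z] (G : X → Set Z) (x : X) : Prop :=
  ∀ V : Set Z, IsOpen V → (G x ∩ V).Nonempty → ∃ U ∈ nhds x, ∀ u ∈ U, (G u ∩ V).Nonempty

/-- `G` is l.s.c. at every point of some ball around `xb`. -/
def LscAround {X Z : Type*} [SeminormedAddCommGroup X] [TopologicalSpace Z]
    (G : X → Set Z) (xb : X) : Prop :=
  ∃ ρ > 0, ∀ x ∈ Metric.closedBall xb ρ, LscAt G x

/-- `G` is metrically `C`-increasing around `xb` relative to `S`, with witnesses `α > 1`, `δ > 0`. -/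
def MetIncrWith {X Z : Type*} [SeminormedAddCommGroup X] [SeminormedAddCommGroup Z]
    (G : X → Set Z) (S : Set X) (C : Set Z) (xb : X) (α δ : ℝ) : Prop :=
  ∀ x ∈ Metric.closedBall xb δ ∩ S, ∀ r ∈ Set.Ioo (0:ℝ) δ,
    ∃ z ∈ Metric.closedBall x r ∩ S, enlarge (G z) (α * r) ⊆ enlarge (G x + C) r

/-- `G` is metrically `C`-increasing around `xb` relative to `S`. -/
def MetIncr {X Z : Type*} [SeminormedAddCommGroup X] [SeminormedAddCommGroup Z]
    (G : X → Set Z) (S : Set X) (C : Set Z) (xb : X) : Prop :=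
  ∃ α > 1, ∃ δ > 0, MetIncrWith G S C xb α δ

/-- The exact bound of metric `C`-increase of `G` around `xb`, relative to `S`. -/
def incrBound {X Z : Type*} [SeminormedAddCommGroup X] [SeminormedAddCommGroup Z]
    (G : X → Set Z) (S : Set X) (C : Set Z) (xb : X) : ℝ≥0∞ :=
  sSup {a : ℝ≥0∞ | ∃ α : ℝ, a = ENNReal.ofReal α ∧ 1 < α ∧ ∃ δ > 0, MetIncrWith G S C xb α δ}

open Classical in
/-- Strong slope of `φ` relative to `S` at `x`: `0` if `x` is a local minimizer of `φ` on `S`,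
otherwise `inf_{r>0} sup_{z ∈ B(x,r)∩S, z ≠ x} (φ(x) − φ(z))/‖x−z‖`. -/
def strongSlope {X : Type*} [SeminormedAddCommGroup X] (φ : X → ℝ≥0∞) (S : Set X) (x : X) :
    ℝ≥0∞ :=
  if ∃ r > 0, ∀ z ∈ S ∩ Metric.closedBall x r, φ x ≤ φ z then 0
  else ⨅ r ∈ Set.Ioi (0:ℝ), ⨆ z ∈ (S ∩ Metric.closedBall x r) \ {x},
    (φ x - φ z) / ENNReal.ofReal ‖x - z‖

/-- `ψ` is a local error bound function for `R` near `xb`, relative to `S`. -/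
def LocErrBoundFun {X : Type*} [SeminormedAddCommGroup X]
    (ψ : X → ℝ≥0∞) (R S : Set X) (xb : X) : Prop :=
  ∃ δ > 0, (∀ x ∈ Metric.closedBall xb δ ∩ S, ENNReal.ofReal (Metric.infDist x R) ≤ ψ x) ∧
    ∀ x ∈ R, ψ x = ENNReal.ofReal (Metric.infDist x R)

/-- `f` is `K`-Lipschitz near `xb` with constant `ℓ` and vector `e`. -/
def KLipschitzNearWith {X Y : Type*} [SeminormedAddCommGroup X] [SeminormedAddCommGroup Y]
    [NormedSpace ℝ Y] (f : X → Y) (K : Set Y) (xb : X) (ℓ : ℝ) (e : Y) : Prop :=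
  ∃ δ > 0, ∀ x₁ ∈ Metric.closedBall xb δ, ∀ x₂ ∈ Metric.closedBall xb δ,
    f x₁ - f x₂ + (ℓ * ‖x₁ - x₂‖) • e ∈ K

/-- `xb` is a locally weakly efficient solution of minimizing `f` over `R`
(w.r.t. the ordering cone `K`). -/
def LocWeakEffOn {X Y : Type*} [SeminormedAddCommGroup X] [SeminormedAddCommGroup Y]
    (f : X → Y) (R : Set X) (K : Set Y) (xb : X) : Prop :=
  ∃ δ > 0, ∀ x ∈ R ∩ Metric.closedBall xb δ, f xb - f x ∉ interior K

/-- `xb` is a locally efficient solution of minimizing `f` over `R`. -/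
def LocEffOn {X Y : Type*} [SeminormedAddCommGroup X] [SeminormedAddCommGroup Y]
    (f : X → Y) (R : Set X) (K : Set Y) (xb : X) : Prop :=
  ∃ δ > 0, ∀ x ∈ R ∩ Metric.closedBall xb δ, f xb - f x ∈ K → f x = f xb

/-- Contingent (Bouligand tangent) cone to `A` at `xb`. -/
def contingentCone {X : Type*} [SeminormedAddCommGroup X] [NormedSpace ℝ X]
    (A : Set X) (xb : X) : Set X :=
  {v | ∃ (vn : ℕ → X) (tn : ℕ → ℝ), Filter.Tendsto vn Filter.atTop (nhds v) ∧
    Filter.Tendsto tn Filter.atTop (nhds 0) ∧ (∀ n, 0 < tn n) ∧ ∀ n, xb + tn n • vn n ∈ A}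

/-- Feasible direction cone to `A` at `xb`. -/
def feasDirCone {X : Type*} [SeminormedAddCommGroup X] [NormedSpace ℝ X]
    (A : Set X) (xb : X) : Set X :=
  {v | ∃ δ > 0, ∀ t ∈ Set.Ioo (0:ℝ) δ, xb + t • v ∈ A}

/-- Weak feasible direction cone to `A` at `xb`. -/
def weakFeasDirCone {X : Type*} [SeminormedAddCommGroup X] [NormedSpace ℝ X]
    (A : Set X) (xb : X) : Set X :=
  {v | ∀ ε > 0, ∃ t ∈ Set.Ioo (0:ℝ) ε, xb + t • v ∈ A}

/-- Fréchet upper subdifferential of an `[0,∞]`-valued function `φ` (finite at `xb`) at `xb`. -/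
def FUpperSubdiff {X : Type*} [NormedAddCommGroup X] [NormedSpace ℝ X]
    (φ : X → ℝ≥0∞) (xb : X) : Set (X →L[ℝ] ℝ) :=
  {p | ∀ ε > 0, ∃ δ > 0, ∀ x ∈ Metric.ball xb δ, x ≠ xb →
    φ x ≠ ⊤ ∧ (φ x).toReal - (φ xb).toReal - p (x - xb) ≤ ε * ‖x - xb‖}

/-- `d` is the directional derivative of `f` at `xb` in direction `v`. -/
def HasDirDerivAt {X Y : Type*} [SeminormedAddCommGroup X] [NormedSpace ℝ X]
    [SeminormedAddCommGroup Y] [NormedSpace ℝ Y] (f : X → Y) (xb v : X) (d : Y) : Prop :=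
  Filter.Tendsto (fun t : ℝ => t⁻¹ • (f (xb + t • v) - f xb)) (nhdsWithin 0 (Set.Ioi 0)) (nhds d)

/-- `H` is an outer prederivative of `G` at `xb`. -/
def OuterPrederivAt {X Z : Type*} [SeminormedAddCommGroup X] [NormedSpace ℝ X]
    [SeminormedAddCommGroup Z] [NormedSpace ℝ Z] (G H : X → Set Z) (xb : X) : Prop :=
  (∀ t : ℝ, 0 < t → ∀ v, H (t • v) = t • H v) ∧
  ∀ ε > 0, ∃ δ > 0, ∀ x ∈ Metric.closedBall xb δ,
    G x ⊆ G xb + H (x - xb) + Metric.closedBall 0 (ε * ‖x - xb‖)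

/-- `H` is Lipschitz with respect to the Hausdorff distance. -/
def HausLipschitz {X Z : Type*} [SeminormedAddCommGroup X] [SeminormedAddCommGroup Z]
    (H : X → Set Z) : Prop :=
  ∃ l : ℝ, 0 ≤ l ∧ ∀ x₁ x₂ : X,
    EMetric.hausdorffEdist (H x₁) (H x₂) ≤ ENNReal.ofReal (l * ‖x₁ - x₂‖)

/-- `h` is the B-derivative of `f` at `xb`. -/
def IsBDerivAt {X Y : Type*} [NormedAddCommGroup X] [NormedSpace ℝ X]
    [NormedAddCommGroup Y] [NormedSpace ℝ Y] (f : X → Y) (h : X → Y) (xb : X) : Prop :=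
  Continuous h ∧ (∀ t : ℝ, 0 < t → ∀ v, h (t • v) = t • h v) ∧
  Filter.Tendsto (fun x => ‖x - xb‖⁻¹ • (f x - f xb - h (x - xb)))
    (nhdsWithin xb {xb}ᶜ) (nhds 0)

/-- Upper inverse image `H⁺¹(C)` of `C` through `H`. -/
def upperInv {X Z : Type*} (H : X → Set Z) (C : Set Z) : Set X := {x | H x ⊆ C}

end

/-!
Suppose `v ∈ H⁺¹(C) ∩ T(S, x̄)` but `-Bf(x̄; v) ∈ int K`. Take `x̄ + t u ∈ S` with `t ↓ 0`,
`u → v`. Since `H(t v) ⊆ C`, the outer prederivative and the Lipschitz constant `l` of `H` bound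
the constraint violation `sup_{z ∈ G(x̄ + t u)} d(z, C)` by `o(t) + l t ‖u - v‖`. Metric
`C`-increase halves such a violation at the price of a step of proportional length; iterating
(completeness) and passing to the limit (lower semicontinuity) gives feasible points `x̄ + t w`
with `w → v`. B-differentiability then puts `f(x̄) - f(x̄ + t w)` in `int K`, contradicting local
weak efficiency. So `-Bf(x̄; ·)` misses `int K` on `H⁺¹(C) ∩ T(S, x̄)`, and separating the open
convex set `Bf(H⁺¹(C) ∩ T(S, x̄)) + K + int K` from `0` gives `y*`.
-/

lemma nonneg_of_forall_pos_add_mul {a b : ℝ} (h : ∀ t > 0, 0 < a + t * b) : 0 ≤ a := by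
  have hlim : Tendsto (fun t : ℝ => a + t * b) (𝓝[>] 0) (𝓝 a) := by
    simpa using ((by fun_prop : Continuous fun t : ℝ => a + t * b).tendsto 0).mono_left
      nhdsWithin_le_nhds
  exact ge_of_tendsto hlim (eventually_nhdsWithin_of_forall fun t ht => (h t ht).le)

namespace ConvexCone

variable {E : Type*} [AddCommGroup E] [Module ℝ E]

def ofConvex (s : Set E) (hconv : Convex ℝ s) (hcone : ∀ t : ℝ, 0 < t → ∀ z ∈ s, t • z ∈ s) :
    ConvexCone ℝ E where
  carrier := s
  smul_mem' t ht z hz := hcone t ht z hz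
  add_mem' a ha b hb := by
    have h := hcone 2 two_pos _
      (hconv ha hb (by norm_num : (0:ℝ) ≤ 2⁻¹) (by norm_num : (0:ℝ) ≤ 2⁻¹) (by norm_num))
    simpa only [smul_add, smul_smul, mul_inv_cancel₀ (two_ne_zero' ℝ), one_smul] using h

variable [TopologicalSpace E] (K : ConvexCone ℝ E)

lemma smul_mem_interior [ContinuousConstSMul ℝ E] {t : ℝ} (ht : 0 < t) {y : E}
    (hy : y ∈ interior (K : Set E)) : t • y ∈ interior (K : Set E) := by
  have hsub : t • interior (K : Set E) ⊆ interior (K : Set E) := by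
    rw [← interior_smul₀ ht.ne']
    exact interior_mono (Set.smul_set_subset_iff.2 fun z hz => K.smul_mem ht hz)
  exact hsub (Set.smul_mem_smul_set hy)

variable [IsTopologicalAddGroup E]

lemma add_mem_interior {k y : E} (hk : k ∈ K) (hy : y ∈ interior (K : Set E)) :
    k + y ∈ interior (K : Set E) := by
  have hsub : (k + ·) '' interior (K : Set E) ⊆ K := by
    rintro _ ⟨z, hz, rfl⟩
    exact K.add_mem hk (interior_subset hz)
  exact interior_maximal hsub (isOpenMap_add_left k _ isOpen_interior) ⟨y, hy, rfl⟩

lemma exists_dual_nonneg [ContinuousSMul ℝ E] (hKint : (interior (K : Set E)).Nonempty)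
    {P : Set E} (hP : P.Nonempty) (hPK : Convex ℝ (P + (K : Set E)))
    (hneg : ∀ p ∈ P, -p ∉ interior (K : Set E)) :
    ∃ q : E →L[ℝ] ℝ, q ≠ 0 ∧ (∀ y ∈ K, 0 ≤ q y) ∧ ∀ p ∈ P, 0 ≤ q p := by
  obtain ⟨e, he⟩ := hKint
  obtain ⟨p₀, hp₀⟩ := hP
  have hU0 : (0 : E) ∉ P + (K : Set E) + interior (K : Set E) := by
    rintro ⟨_, ⟨p, hp, k, hk, rfl⟩, y, hy, hpky⟩
    have : k + y + p = 0 := by simp only at hpky; rw [← hpky]; abel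
    exact hneg p hp (neg_eq_of_add_eq_zero_left this ▸ K.add_mem_interior hk hy)
  obtain ⟨φ, hφ⟩ := geometric_hahn_banach_open_point (hPK.add K.convex.interior)
    isOpen_interior.add_left hU0
  have hq : ∀ p ∈ P, ∀ k ∈ K, ∀ y ∈ interior (K : Set E), 0 < (-φ) (p + k + y) := by
    intro p hp k hk y hy
    have := hφ _ (add_mem_add (add_mem_add hp hk) hy)
    simp only [map_zero, map_add, neg_apply] at this ⊢
    linarith
  refine ⟨-φ, fun h0 => ?_, fun y hy => ?_, fun p hp => ?_⟩
  · simpa [h0] using hq p₀ hp₀ e (interior_subset he) e he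
  · refine nonneg_of_forall_pos_add_mul (b := (-φ) (p₀ + e)) fun t ht => ?_
    have := mul_pos ht (hq p₀ hp₀ _ (K.smul_mem (inv_pos.2 ht) hy) e he)
    simp only [map_add, map_smul, smul_eq_mul] at this ⊢
    field_simp at this
    linarith
  · refine nonneg_of_forall_pos_add_mul (b := 2 * (-φ) e) fun t ht => ?_
    have hte := K.smul_mem_interior ht he
    have := hq p hp _ (interior_subset hte) _ hte
    simp only [map_add, map_smul, smul_eq_mul] at this
    linarith

end ConvexCone

section DistanceToCone

variable {Z : Type*} [NormedAddCommGroup Z] [NormedSpace ℝ Z] {C : ConvexCone ℝ Z}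

lemma infDist_add_le_of_mem (hCne : (C : Set Z).Nonempty) {c : Z} (hc : c ∈ C) (z : Z) :
    infDist (c + z) C ≤ infDist z C := by
  have himg : (c + ·) '' (C : Set Z) ⊆ C := by
    rintro _ ⟨b, hb, rfl⟩
    exact C.add_mem hc hb
  calc infDist (c + z) C ≤ infDist (c + z) ((c + ·) '' (C : Set Z)) :=
        infDist_le_infDist_of_subset himg (hCne.image _)
    _ = infDist z C := infDist_image (isometry_add_left c)

lemma infDist_le_add_infDist_add (hCne : (C : Set Z).Nonempty) {A : Set Z} (hA : A.Nonempty)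
    {s : ℝ} (hAs : ∀ g ∈ A, infDist g C ≤ s) (x : Z) :
    infDist x C ≤ s + infDist x (A + C) := by
  have : infDist x C - s ≤ infDist x (A + C) := by
    refine (le_infDist (hA.add hCne)).2 ?_
    rintro _ ⟨g, hg, c, hc, rfl⟩
    have h1 : infDist x C ≤ infDist (g + c) C + dist x (g + c) := infDist_le_infDist_add_dist
    have h2 := infDist_add_le_of_mem hCne hc g
    rw [add_comm] at h2
    linarith [hAs g hg]
  linarith

lemma Convex.mul_infDist_le_infDist_add_smul_sub {D : Set Z} (hD : Convex ℝ D) {c : Z}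
    (hc : c ∈ D) {t : ℝ} (ht : 1 ≤ t) (w : Z) :
    t * infDist w D ≤ infDist (c + t • (w - c)) D := by
  have ht0 : 0 < t := by linarith
  refine (le_infDist ⟨c, hc⟩).2 fun c' hc' => ?_
  have hm : (1 - t⁻¹) • c + t⁻¹ • c' ∈ D :=
    hD hc hc' (sub_nonneg.2 (inv_le_one_of_one_le₀ ht)) (inv_nonneg.2 ht0.le) (by ring)
  have heq : c + t • (w - c) - c' = t • (w - ((1 - t⁻¹) • c + t⁻¹ • c')) := by
    simp only [smul_sub, smul_add, smul_smul, mul_sub, mul_inv_cancel₀ ht0.ne', mul_one]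
    module
  calc t * infDist w D ≤ t * dist w ((1 - t⁻¹) • c + t⁻¹ • c') :=
        mul_le_mul_of_nonneg_left (infDist_le_dist_of_mem hm) ht0.le
    _ = dist (c + t • (w - c)) c' := by
        rw [dist_eq_norm, dist_eq_norm, heq, norm_smul, Real.norm_of_nonneg ht0.le]

lemma infDist_le_sub_of_enlarge_subset (hCne : (C : Set Z).Nonempty) {A B : Set Z}
    (hA : A.Nonempty) {α r s : ℝ} (hα : 1 < α) (hr : 0 < r) (hrs : (α - 1) * r ≤ s)
    (hAs : ∀ g ∈ A, infDist g C ≤ s) (hAB : enlarge B (α * r) ⊆ enlarge (A + C) r)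
    {w : Z} (hw : w ∈ B) : infDist w C ≤ s - (α - 1) * r := by
  set d := infDist w C
  rcases (show 0 ≤ d from infDist_nonneg).eq_or_lt with hd | hd
  · linarith
  have key : ∀ θ ∈ Ioo (0:ℝ) 1, d + θ * (α * r) ≤ s + r := by
    rintro θ ⟨hθ0, hθ1⟩
    obtain ⟨c, hc, hwc⟩ := (infDist_lt_iff hCne).1
      (show d < d / θ by rw [lt_div_iff₀ hθ0]; nlinarith)
    have hn : d ≤ dist w c := infDist_le_dist_of_mem hc
    generalize hn_def : dist w c = n at hwc hn
    have hnpos : 0 < n := hd.trans_le hn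
    have hθn : θ * n < d := by rwa [lt_div_iff₀ hθ0, mul_comm] at hwc
    -- moving `w` away from `c` by `α * r` raises its distance to `C` by about `α * r`,
    -- while the inclusion `hAB` and the bound on `A` cap that distance by `s + r`
    set p := c + (1 + α * r / n) • (w - c)
    have hpw : dist p w = α * r := by
      have : p - w = (α * r / n) • (w - c) := by simp only [p]; module
      rw [dist_eq_norm, this, norm_smul, Real.norm_of_nonneg (by positivity), ← dist_eq_norm,
        hn_def, div_mul_cancel₀ _ hnpos.ne']
    have hpB : infDist p (A + C) ≤ r := hAB ((infDist_le_dist_of_mem hw).trans hpw.le)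
    have hupper := infDist_le_add_infDist_add hCne hA hAs p
    have hlower := C.convex.mul_infDist_le_infDist_add_smul_sub hc
      (le_add_of_nonneg_right (by positivity : 0 ≤ α * r / n)) w
    have hgain : θ * (α * r) ≤ α * r / n * d := by
      rw [div_mul_eq_mul_div, le_div_iff₀ hnpos]
      nlinarith [mul_pos (by linarith : 0 < α) hr]
    nlinarith
  have hlim : Tendsto (fun θ : ℝ => d + θ * (α * r)) (𝓝[<] 1) (𝓝 (d + 1 * (α * r))) :=
    ((continuous_const.add (continuous_id.mul continuous_const)).tendsto 1).mono_left
      nhdsWithin_le_nhds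
  have := le_of_tendsto hlim (eventually_of_mem (Ioo_mem_nhdsLT zero_lt_one) key)
  linarith

lemma infDist_le_of_mem_add_add_closedBall (hCne : (C : Set Z).Nonempty) {A B B' : Set Z}
    (hA : A ⊆ C) (hB' : B' ⊆ C) {η ρ : ℝ} (hη : 0 ≤ η)
    (hBB' : hausdorffEDist B B' ≤ ENNReal.ofReal η) {z : Z}
    (hz : z ∈ A + B + closedBall 0 ρ) : infDist z C ≤ η + ρ := by
  obtain ⟨_, ⟨g, hg, b, hb, rfl⟩, e, he, rfl⟩ := hz
  have hfin : hausdorffEDist B B' ≠ ⊤ := ne_top_of_le_ne_top ENNReal.ofReal_ne_top hBB'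
  have hb' : infDist b C ≤ η := calc
    infDist b C ≤ infDist b B' :=
      infDist_le_infDist_of_subset hB' (nonempty_of_hausdorffEDist_ne_top ⟨b, hb⟩ hfin)
    _ ≤ hausdorffDist B B' := infDist_le_hausdorffDist_of_mem hb hfin
    _ ≤ η := ENNReal.toReal_le_of_le_ofReal hη hBB'
  have he' : dist (g + b + e) (g + b) ≤ ρ := by simpa using he
  calc infDist (g + b + e) C ≤ infDist (g + b) C + dist (g + b + e) (g + b) :=
        infDist_le_infDist_add_dist
    _ ≤ η + ρ := by linarith [infDist_add_le_of_mem hCne (hA hg) b]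

end DistanceToCone

lemma LscAt.subset_of_tendsto {X Z : Type*} [TopologicalSpace X] [MetricSpace Z]
    {G : X → Set Z} {x : X} (hG : LscAt G x) {C : Set Z} (hC : IsClosed C) (hCne : C.Nonempty)
    {y : ℕ → X} {s : ℕ → ℝ} (hy : Tendsto y atTop (𝓝 x)) (hs : Tendsto s atTop (𝓝 0))
    (hys : ∀ k, ∀ g ∈ G (y k), infDist g C ≤ s k) : G x ⊆ C := by
  intro z hz
  rw [hC.mem_iff_infDist_zero hCne]
  refine le_antisymm (le_of_forall_pos_le_add fun ε hε => ?_) infDist_nonneg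
  obtain ⟨U, hU, hUG⟩ := hG _ isOpen_ball ⟨z, hz, mem_ball_self (half_pos hε)⟩
  obtain ⟨k, hkU, hks⟩ :=
    ((hy.eventually_mem hU).and (hs.eventually_lt_const (half_pos hε))).exists
  obtain ⟨g, hg, hgz⟩ := hUG _ hkU
  have := hys k g hg
  have : dist z g < ε / 2 := by rw [dist_comm]; exact hgz
  linarith [infDist_le_infDist_add_dist (s := C) (x := z) (y := g)]

namespace MetIncrWith

variable {X Z : Type*} [NormedAddCommGroup X] [NormedAddCommGroup Z] [NormedSpace ℝ Z]
  {G : X → Set Z} {S : Set X} {C : ConvexCone ℝ Z} {xb : X} {α δ : ℝ}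

lemma mono (h : MetIncrWith G S C xb α δ) {δ' : ℝ} (hδ' : δ' ≤ δ) :
    MetIncrWith G S C xb α δ' :=
  fun x hx r hr => h x ⟨closedBall_subset_closedBall hδ' hx.1, hx.2⟩ r ⟨hr.1, hr.2.trans_le hδ'⟩

lemma exists_halving_step (h : MetIncrWith G S C xb α δ) (hα : 1 < α)
    (hCne : (C : Set Z).Nonempty) {y : X} (hy : y ∈ closedBall xb δ ∩ S) (hGy : (G y).Nonempty)
    {s : ℝ} (hs : 0 < s) (hsδ : s / 2 / (α - 1) < δ) (hys : ∀ g ∈ G y, infDist g C ≤ s) :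
    ∃ z ∈ closedBall y (s / 2 / (α - 1)) ∩ S, ∀ g ∈ G z, infDist g C ≤ s / 2 := by
  have hβ : 0 < α - 1 := sub_pos.2 hα
  obtain ⟨z, hz, hzy⟩ := h y hy _ ⟨by positivity, hsδ⟩
  have hr : (α - 1) * (s / 2 / (α - 1)) = s / 2 := by field_simp
  refine ⟨z, hz, fun g hg => ?_⟩
  have := infDist_le_sub_of_enlarge_subset hCne hGy hα (by positivity) (by linarith) hys hzy hg
  linarith

lemma exists_feasible [CompleteSpace X] (h : MetIncrWith G S C xb α δ) (hα : 1 < α)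
    (hlsc : ∀ x ∈ closedBall xb δ, LscAt G x) (hScl : IsClosed S) (hG : ∀ x, (G x).Nonempty)
    (hCcl : IsClosed (C : Set Z)) (hCne : (C : Set Z).Nonempty) {x₀ : X} (hx₀ : x₀ ∈ S)
    {s₀ : ℝ} (hs₀ : 0 ≤ s₀) (hreach : dist x₀ xb + s₀ / (α - 1) ≤ δ)
    (hx₀s : ∀ g ∈ G x₀, infDist g C ≤ s₀) :
    ∃ x ∈ S, G x ⊆ C ∧ dist x₀ x ≤ s₀ / (α - 1) := by
  rcases hs₀.eq_or_lt with rfl | hs₀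
  · refine ⟨x₀, hx₀, fun g hg => ?_, by simp⟩
    exact (hCcl.mem_iff_infDist_zero hCne).2 (le_antisymm (hx₀s g hg) infDist_nonneg)
  set D := s₀ / (α - 1)
  have hD : 0 < D := by positivity
  let P : ℕ → X → Prop := fun k y =>
    y ∈ S ∧ dist y x₀ ≤ D - D / 2 ^ k ∧ ∀ g ∈ G y, infDist g C ≤ s₀ / 2 ^ k
  have step : ∀ k y, P k y → ∃ z, P (k + 1) z ∧ dist y z ≤ D / 2 / 2 ^ k := by
    rintro k y ⟨hyS, hyx₀, hys⟩
    have hr : s₀ / 2 ^ k / 2 / (α - 1) = D / 2 / 2 ^ k := by simp only [D]; ring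
    have hrD : D / 2 / 2 ^ k < D := by
      rw [div_div]
      exact div_lt_self hD (by have := one_le_pow₀ (M₀ := ℝ) (n := k) one_le_two; linarith)
    have hyb : y ∈ closedBall xb δ := by
      have := dist_triangle y x₀ xb
      rw [mem_closedBall]
      linarith [div_pos hD (pow_pos two_pos k)]
    obtain ⟨z, ⟨hzy, hzS⟩, hzs⟩ := h.exists_halving_step hα hCne ⟨hyb, hyS⟩ (hG y)
      (by positivity) (by rw [hr]; linarith [dist_nonneg (x := x₀) (y := xb)]) hys
    rw [hr, mem_closedBall, dist_comm] at hzy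
    refine ⟨z, ⟨hzS, ?_, fun g hg => ?_⟩, hzy⟩
    · have := dist_triangle z y x₀
      have : D / 2 ^ k - D / 2 ^ (k + 1) = D / 2 / 2 ^ k := by ring
      rw [dist_comm] at hzy
      linarith
    · rw [pow_succ, ← div_div]
      linarith [hzs g hg, div_div s₀ (2 ^ k) 2]
  choose! F hFP hFdist using step
  let y : ℕ → X := fun k => Nat.rec x₀ F k
  have hy : ∀ k, P k (y k) := by
    intro k
    induction k with
    | zero => exact show P 0 x₀ from ⟨hx₀, by simp, by simpa using hx₀s⟩
    | succ k ih => exact hFP k _ ih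
  have hydist : ∀ k, dist (y k) (y (k + 1)) ≤ D / 2 / 2 ^ k := fun k => hFdist k _ (hy k)
  obtain ⟨x, hx⟩ := cauchySeq_tendsto_of_complete (cauchySeq_of_le_geometric_two hydist)
  have hx₀x : dist x₀ x ≤ D := dist_le_of_le_geometric_two_of_tendsto₀ hydist hx
  refine ⟨x, hScl.mem_of_tendsto hx (Eventually.of_forall fun k => (hy k).1), ?_, hx₀x⟩
  have hxb : x ∈ closedBall xb δ := by
    rw [mem_closedBall]
    linarith [dist_triangle x x₀ xb, dist_comm x x₀]
  exact (hlsc x hxb).subset_of_tendsto hCcl hCne hx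
    (tendsto_const_nhds.div_atTop (tendsto_pow_atTop_atTop_of_one_lt one_lt_two))
    fun k => (hy k).2.2

end MetIncrWith

section TangentDirections

variable {X Z : Type*} [NormedAddCommGroup X] [NormedSpace ℝ X]
  [NormedAddCommGroup Z] [NormedSpace ℝ Z] {C : ConvexCone ℝ Z}

lemma exists_feasible_of_outerPrederiv [CompleteSpace X] {G H : X → Set Z} {S : Set X} {xb : X}
    {α δ : ℝ} (hmi : MetIncrWith G S C xb α δ) (hα : 1 < α)
    (hlsc : ∀ x ∈ closedBall xb δ, LscAt G x) (hScl : IsClosed S) (hG : ∀ x, (G x).Nonempty)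
    (hCcl : IsClosed (C : Set Z)) (hCne : (C : Set Z).Nonempty) (hxbG : G xb ⊆ C)
    (hHhom : ∀ t : ℝ, 0 < t → ∀ v, H (t • v) = t • H v) {l : ℝ} (hl : 0 ≤ l)
    (hlip : ∀ x₁ x₂, hausdorffEDist (H x₁) (H x₂) ≤ ENNReal.ofReal (l * ‖x₁ - x₂‖))
    {ε ρ : ℝ} (hε : 0 ≤ ε)
    (hpred : ∀ x ∈ closedBall xb ρ, G x ⊆ G xb + H (x - xb) + closedBall 0 (ε * ‖x - xb‖))
    {v : X} (hv : v ∈ upperInv H C) {t : ℝ} (ht : 0 < t) {u : X} (hu : xb + t • u ∈ S)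
    (htu : t * ‖u‖ ≤ ρ) (hreach : t * ‖u‖ + t * (ε * ‖u‖ + l * ‖u - v‖) / (α - 1) ≤ δ) :
    ∃ w, xb + t • w ∈ S ∩ {x | G x ⊆ C} ∧ ‖w - u‖ ≤ (ε * ‖u‖ + l * ‖u - v‖) / (α - 1) := by
  have hnorm : ‖xb + t • u - xb‖ = t * ‖u‖ := by
    rw [add_sub_cancel_left, norm_smul, Real.norm_of_nonneg ht.le]
  have htv : H (t • v) ⊆ C := by
    rw [hHhom t ht v]
    rintro _ ⟨z, hz, rfl⟩
    exact C.smul_mem ht (hv hz)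
  have hbound : ∀ z ∈ G (xb + t • u), infDist z C ≤ t * (ε * ‖u‖ + l * ‖u - v‖) := by
    intro z hz
    have hz' := hpred _ (by rwa [mem_closedBall, dist_eq_norm, hnorm]) hz
    rw [add_sub_cancel_left] at hz'
    have hH := hlip (t • u) (t • v)
    rw [← smul_sub, norm_smul, Real.norm_of_nonneg ht.le, ← mul_assoc, mul_comm l t,
      mul_assoc] at hH
    have := infDist_le_of_mem_add_add_closedBall hCne hxbG htv (by positivity) hH hz'
    rw [norm_smul, Real.norm_of_nonneg ht.le] at this
    linarith
  obtain ⟨x, hxS, hxG, hx⟩ := hmi.exists_feasible hα hlsc hScl hG hCcl hCne hu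
    (by positivity) (by rwa [dist_eq_norm, hnorm]) hbound
  refine ⟨t⁻¹ • (x - xb), ?_, ?_⟩
  · rw [smul_inv_smul₀ ht.ne', add_sub_cancel]
    exact ⟨hxS, hxG⟩
  · have : t⁻¹ • (x - xb) - u = t⁻¹ • (x - (xb + t • u)) := by
      rw [smul_sub, smul_sub t⁻¹ x, smul_add, inv_smul_smul₀ ht.ne']
      abel
    rw [this, norm_smul, Real.norm_of_nonneg (inv_pos.2 ht).le, ← dist_eq_norm, dist_comm,
      inv_mul_le_iff₀ ht, mul_div_assoc']
    exact hx

lemma zero_mem_contingentCone {A : Set X} {xb : X} (hxb : xb ∈ A) : (0 : X) ∈ contingentCone A xb :=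
  ⟨fun _ => 0, fun n => 1 / (n + 1), tendsto_const_nhds, tendsto_one_div_add_atTop_nhds_zero_nat,
    fun n => by positivity, fun n => by simpa using hxb⟩

lemma frequently_of_mem_contingentCone {A : Set X} {xb v : X} (hv : v ∈ contingentCone A xb) :
    ∃ᶠ p in 𝓝[>] (0 : ℝ) ×ˢ 𝓝 v, xb + p.1 • p.2 ∈ A := by
  obtain ⟨vn, tn, hvn, htn, htpos, hmem⟩ := hv
  have : Tendsto (fun n => (tn n, vn n)) atTop (𝓝[>] 0 ×ˢ 𝓝 v) :=
    (tendsto_nhdsWithin_iff.2 ⟨htn, Eventually.of_forall htpos⟩).prodMk hvn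
  exact this.frequently (Frequently.of_forall hmem)

lemma frequently_feasible_of_mem_upperInv [CompleteSpace X] {G H : X → Set Z} {S : Set X}
    {xb : X} (hScl : IsClosed S) (hG : ∀ x, (G x).Nonempty) (hCcl : IsClosed (C : Set Z))
    (hCne : (C : Set Z).Nonempty) (hxbG : G xb ⊆ C) (hlsc : LscAround G xb)
    (hmi : MetIncr G S C xb) (hH : OuterPrederivAt G H xb) (hHLip : HausLipschitz H) {v : X}
    (hv : v ∈ upperInv H C) (hS : ∃ᶠ p in 𝓝[>] (0 : ℝ) ×ˢ 𝓝 v, xb + p.1 • p.2 ∈ S) :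
    ∃ᶠ p in 𝓝[>] (0 : ℝ) ×ˢ 𝓝 v, xb + p.1 • p.2 ∈ S ∩ {x | G x ⊆ C} := by
  obtain ⟨α, hα, δ, hδ, hmi⟩ := hmi
  obtain ⟨ρ, hρ, hlsc⟩ := hlsc
  obtain ⟨l, hl, hlip⟩ := hHLip
  have hβ : 0 < α - 1 := sub_pos.2 hα
  have hlsc₀ : ∀ x ∈ closedBall xb (min δ ρ), LscAt G x :=
    fun x hx => hlsc x (closedBall_subset_closedBall (min_le_right δ ρ) hx)
  set M := ‖v‖ + 1
  have hM : M ≠ 0 := by positivity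
  rw [((nhdsGT_basis (0 : ℝ)).prod nhds_basis_ball).frequently_iff]
  rintro ⟨τ, γ⟩ ⟨hτ, hγ⟩
  set ε := γ * (α - 1) / (2 * M)
  obtain ⟨δp, hδp, hpred⟩ := hH.2 ε (by positivity)
  set A := M + (ε * M + l) / (α - 1)
  have hcont : Tendsto (fun u => (ε * M + l * ‖u - v‖) / (α - 1) + ‖u - v‖) (𝓝 v)
      (𝓝 (γ / 2)) := by
    have : Continuous fun u : X => (ε * M + l * ‖u - v‖) / (α - 1) + ‖u - v‖ := by fun_prop
    convert this.tendsto v using 2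
    simp only [ε, sub_self, norm_zero, mul_zero, add_zero]
    field_simp
  have hu : ∀ᶠ u in 𝓝 v, ‖u - v‖ < 1 ∧ (ε * M + l * ‖u - v‖) / (α - 1) + ‖u - v‖ < γ := by
    refine Eventually.and ?_ (hcont.eventually_lt_const (half_lt_self hγ))
    exact eventually_of_mem (ball_mem_nhds v one_pos) fun u hu => by
      rwa [mem_ball, dist_eq_norm] at hu
  have ht : ∀ᶠ t in 𝓝[>] (0 : ℝ), t ∈ Ioo 0 τ ∧ t * A < min δp (min δ ρ) := by
    refine Eventually.and (Ioo_mem_nhdsGT hτ) (Tendsto.eventually_lt_const (by positivity) ?_)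
    simpa using ((by fun_prop : Continuous fun t : ℝ => t * A).tendsto 0).mono_left
      nhdsWithin_le_nhds
  obtain ⟨⟨t, u⟩, huS, ⟨htτ, htA⟩, huv, huγ⟩ := (hS.and_eventually (ht.prod_mk hu)).exists
  have huM : ‖u‖ ≤ M := by linarith [norm_le_norm_add_norm_sub' u v]
  have hreach : t * ‖u‖ + t * (ε * ‖u‖ + l * ‖u - v‖) / (α - 1) ≤ t * A := calc
    _ ≤ t * M + t * (ε * M + l * 1) / (α - 1) := by
        gcongr <;> exact htτ.1.le
    _ = t * A := by simp only [A]; ring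
  have hAM : M ≤ A := le_add_of_nonneg_right (by positivity)
  obtain ⟨w, hwR, hw⟩ := exists_feasible_of_outerPrederiv (hmi.mono (min_le_left δ ρ)) hα hlsc₀
    hScl hG hCcl hCne hxbG hH.1 hl hlip (by positivity) hpred hv htτ.1 huS
    (by nlinarith [htτ.1, min_le_left δp (min δ ρ)]) (by linarith [min_le_right δp (min δ ρ)])
  refine ⟨(t, w), ⟨htτ, ?_⟩, hwR⟩
  rw [mem_ball, dist_eq_norm]
  calc ‖w - v‖ ≤ ‖w - u‖ + ‖u - v‖ := norm_sub_le_norm_sub_add_norm_sub w u v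
    _ ≤ (ε * M + l * ‖u - v‖) / (α - 1) + ‖u - v‖ := by
        gcongr
        exact hw.trans (by gcongr)
    _ < γ := huγ

end TangentDirections

lemma tendsto_add_smul_nhdsGT_prod {X : Type*} [NormedAddCommGroup X] [NormedSpace ℝ X]
    (xb v : X) : Tendsto (fun p : ℝ × X => xb + p.1 • p.2) (𝓝[>] 0 ×ˢ 𝓝 v) (𝓝 xb) := by
  have : Tendsto (fun p : ℝ × X => xb + p.1 • p.2) (𝓝 (0, v)) (𝓝 (xb + (0 : ℝ) • v)) :=
    (continuous_const.add (continuous_fst.smul continuous_snd)).tendsto _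
  rw [zero_smul, add_zero, nhds_prod_eq] at this
  exact this.mono_left (prod_mono nhdsWithin_le_nhds le_rfl)

namespace IsBDerivAt

variable {X Y : Type*} [NormedAddCommGroup X] [NormedSpace ℝ X]
  [NormedAddCommGroup Y] [NormedSpace ℝ Y] {f Bf : X → Y} {xb : X}

lemma map_zero (hBf : IsBDerivAt f Bf xb) : Bf 0 = 0 := by
  have h := hBf.2.1 2 two_pos 0
  rw [smul_zero, two_smul] at h
  exact left_eq_add.1 h

lemma tendsto_slope (hBf : IsBDerivAt f Bf xb) (v : X) :
    Tendsto (fun p : ℝ × X => p.1⁻¹ • (f (xb + p.1 • p.2) - f xb)) (𝓝[>] 0 ×ˢ 𝓝 v)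
      (𝓝 (Bf v)) := by
  set r : X → Y := fun x => ‖x - xb‖⁻¹ • (f x - f xb - Bf (x - xb))
  -- `r xb = 0` because `0⁻¹ = 0` in Lean
  have hr : Tendsto r (𝓝 xb) (𝓝 0) := by
    rw [← nhdsNE_sup_pure xb, tendsto_sup]
    exact ⟨hBf.2.2, by simpa [r] using tendsto_pure_nhds r xb⟩
  have hsplit : ∀ᶠ p in 𝓝[>] (0 : ℝ) ×ˢ 𝓝 v,
      Bf p.2 + ‖p.2‖ • r (xb + p.1 • p.2) = p.1⁻¹ • (f (xb + p.1 • p.2) - f xb) := by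
    filter_upwards [tendsto_fst.eventually eventually_mem_nhdsWithin] with ⟨t, w⟩ ht
    rcases eq_or_ne w 0 with rfl | hw
    · simp [hBf.map_zero]
    simp only [r, add_sub_cancel_left, norm_smul, Real.norm_of_nonneg ht.le, hBf.2.1 t ht w,
      smul_smul]
    rw [mul_inv, mul_left_comm, mul_inv_cancel₀ (norm_ne_zero_iff.2 hw), mul_one, smul_sub,
      smul_smul, inv_mul_cancel₀ ht.ne', one_smul]
    abel
  have hlim := ((hBf.1.tendsto v).comp tendsto_snd).add
    (tendsto_snd.norm.smul (hr.comp (tendsto_add_smul_nhdsGT_prod xb v)))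
  rw [smul_zero, add_zero] at hlim
  exact hlim.congr' hsplit

lemma neg_notMem_interior {K : ConvexCone ℝ Y} {R : Set X} (hBf : IsBDerivAt f Bf xb)
    (hweff : LocWeakEffOn f R K xb) {v : X}
    (hR : ∃ᶠ p in 𝓝[>] (0 : ℝ) ×ˢ 𝓝 v, xb + p.1 • p.2 ∈ R) : -Bf v ∉ interior (K : Set Y) := by
  intro hv
  obtain ⟨δ, hδ, hw⟩ := hweff
  have hdesc : ∀ᶠ p in 𝓝[>] (0 : ℝ) ×ˢ 𝓝 v,
      -(p.1⁻¹ • (f (xb + p.1 • p.2) - f xb)) ∈ interior (K : Set Y) :=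
    (hBf.tendsto_slope v).neg (isOpen_interior.mem_nhds hv)
  have hnear : ∀ᶠ p in 𝓝[>] (0 : ℝ) ×ˢ 𝓝 v, xb + p.1 • p.2 ∈ closedBall xb δ :=
    tendsto_add_smul_nhdsGT_prod xb v (closedBall_mem_nhds xb hδ)
  have hpos : ∀ᶠ p in 𝓝[>] (0 : ℝ) ×ˢ 𝓝 v, 0 < p.1 :=
    tendsto_fst.eventually eventually_mem_nhdsWithin
  obtain ⟨⟨t, w⟩, hwR, hwK, hwδ, ht⟩ := (hR.and_eventually (hdesc.and (hnear.and hpos))).exists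
  refine hw _ ⟨hwR, hwδ⟩ ?_
  simpa only [smul_neg, smul_inv_smul₀ ht.ne', neg_sub] using K.smul_mem_interior ht hwK

end IsBDerivAt

theorem statement_11_general
    {X Y Z : Type*} [NormedAddCommGroup X] [NormedSpace ℝ X] [CompleteSpace X]
    [NormedAddCommGroup Y] [NormedSpace ℝ Y]
    [NormedAddCommGroup Z] [NormedSpace ℝ Z]
    (K : Set Y) (hKconv : Convex ℝ K)
    (hKcone : ∀ t : ℝ, 0 < t → ∀ y ∈ K, t • y ∈ K) (hKint : (interior K).Nonempty)
    (S : Set X) (hScl : IsClosed S)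
    (C : Set Z) (hCcl : IsClosed C) (hCconv : Convex ℝ C)
    (hCcone : ∀ t : ℝ, 0 < t → ∀ z ∈ C, t • z ∈ C) (hC0 : (0:Z) ∈ C)
    (f : X → Y) (G : X → Set Z) (hG : ∀ x, (G x).Nonempty)
    (xb : X) (hxbS : xb ∈ S) (hxbG : G xb ⊆ C)
    (hweff : LocWeakEffOn f (S ∩ {x | G x ⊆ C}) K xb)
    (Bf : X → Y) (hBf : IsBDerivAt f Bf xb)
    (hlsc : LscAround G xb) (hmi : MetIncr G S C xb)
    (H : X → Set Z) (hH : OuterPrederivAt G H xb)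
    (hconvlike : Convex ℝ (Bf '' (upperInv H C ∩ contingentCone S xb) + K))
    (hH0 : H 0 ⊆ C) (hHLip : HausLipschitz H) :
    ∃ q : Y →L[ℝ] ℝ, q ≠ 0 ∧ (∀ y ∈ K, 0 ≤ q y) ∧
      ∀ v ∈ upperInv H C ∩ contingentCone S xb, 0 ≤ q (Bf v) := by
  let Kc := ConvexCone.ofConvex K hKconv hKcone
  let Cc := ConvexCone.ofConvex C hCconv hCcone
  have hprimal : ∀ v ∈ upperInv H C ∩ contingentCone S xb, -Bf v ∉ interior K := fun v hv =>
    hBf.neg_notMem_interior (K := Kc) hweff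
      (frequently_feasible_of_mem_upperInv (C := Cc) hScl hG hCcl ⟨0, hC0⟩ hxbG hlsc
        hmi hH hHLip hv.1 (frequently_of_mem_contingentCone hv.2))
  obtain ⟨q, hq0, hqK, hqP⟩ := Kc.exists_dual_nonneg hKint
    (P := Bf '' (upperInv H C ∩ contingentCone S xb))
    ⟨Bf 0, 0, ⟨hH0, zero_mem_contingentCone hxbS⟩, rfl⟩ hconvlike
    (by rintro _ ⟨v, hv, rfl⟩; exact hprimal v hv)
  exact ⟨q, hq0, hqK, fun v hv => hqP _ ⟨v, hv, rfl⟩⟩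

/-- scalarized necessary condition for local weak efficiency. -/
theorem statement_11
    {X Y Z : Type*} [NormedAddCommGroup X] [NormedSpace ℝ X] [CompleteSpace X]
    [NormedAddCommGroup Y] [NormedSpace ℝ Y] [CompleteSpace Y]
    [NormedAddCommGroup Z] [NormedSpace ℝ Z] [CompleteSpace Z]
    (K : Set Y) (hKconv : Convex ℝ K)
    (hKcone : ∀ t : ℝ, 0 < t → ∀ y ∈ K, t • y ∈ K) (hKint : (interior K).Nonempty)
    (S : Set X) (hSne : S.Nonempty) (hScl : IsClosed S)
    (C : Set Z) (hCcl : IsClosed C) (hCconv : Convex ℝ C)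
    (hCcone : ∀ t : ℝ, 0 < t → ∀ z ∈ C, t • z ∈ C) (hC0 : (0:Z) ∈ C)
    (hCne0 : C ≠ {0}) (hCneuniv : C ≠ Set.univ)
    (f : X → Y) (G : X → Set Z) (hG : ∀ x, (G x).Nonempty)
    (xb : X) (hxbS : xb ∈ S) (hxbG : G xb ⊆ C)
    (hweff : LocWeakEffOn f (S ∩ {x | G x ⊆ C}) K xb)
    (Bf : X → Y) (hBf : IsBDerivAt f Bf xb)
    (hlsc : LscAround G xb) (hmi : MetIncr G S C xb)
    (H : X → Set Z) (hH : OuterPrederivAt G H xb)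
    (hconvlike : Convex ℝ (Bf '' (upperInv H C ∩ contingentCone S xb) + K))
    (hH0 : H 0 ⊆ C) (hHLip : HausLipschitz H) :
    ∃ q : Y →L[ℝ] ℝ, q ≠ 0 ∧ (∀ y ∈ K, 0 ≤ q y) ∧
      ∀ v ∈ upperInv H C ∩ contingentCone S xb, 0 ≤ q (Bf v) :=
  statement_11_general K hKconv hKcone hKint S hScl C hCcl hCconv hCcone hC0 f G hG xb hxbS hxbG
    hweff Bf hBf hlsc hmi H hH hconvlike hH0 hHLip
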